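/- arXiv:1503.07686 — 3 statements merged into one kernel-verified Lean document; each statement's English description precedes it below -/
import Mathlib

section
/- Let Γ be an n×n real symmetric matrix with zero diagonal, and let σ² > 0 be such that x'Γx ≤ σ² for every x with x'𝟙 = 1. Then R := 𝟙𝟙' - σ^{-2}Γ is a correlation matrix, i.e., symmetric positive semidefinite with unit diagonal, and Γ = σ²(𝟙𝟙' - R). -/
/-!
Rescaling gives `x ⬝ᵥ Γ *ᵥ x ≤ σ² (x ⬝ᵥ 𝟙)²` whenever `x ⬝ᵥ 𝟙 ≠ 0`. When `x ⬝ᵥ 𝟙 = 0`, the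
constraint holds on the whole line `y + t • x` for any `y` with `y ⬝ᵥ 𝟙 = 1`, and a quadratic in
`t` that is bounded above has nonpositive leading coefficient `x ⬝ᵥ Γ *ᵥ x`. As
`x ⬝ᵥ 𝟙𝟙ᵀ *ᵥ x = (x ⬝ᵥ 𝟙)²`, this inequality is the positive semidefiniteness of `𝟙𝟙ᵀ - σ⁻² Γ`.
-/

open Matrix

theorem nonpos_of_forall_mul_sq_add_mul_le {a b c : ℝ} (h : ∀ t : ℝ, a * t ^ 2 + b * t ≤ c) :
    a ≤ 0 := by
  by_contra! ha
  have hsq (t : ℝ) : a * t ^ 2 ≤ c := by linarith [h t, h (-t)]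
  set t := (|c| + 1) / a + 1
  have ht : 1 ≤ t := le_add_of_nonneg_left (by positivity)
  have hat : |c| + 1 ≤ a * t := by
    rw [mul_add, mul_div_cancel₀ _ ha.ne']
    linarith
  have := calc
    c < |c| + 1 := by linarith [le_abs_self c]
    _ ≤ a * t := hat
    _ ≤ a * t * t := le_mul_of_one_le_right (by linarith [abs_nonneg c]) ht
    _ = a * t ^ 2 := by ring
  linarith [hsq t]

section

variable {ι : Type*} [Fintype ι] {A : Matrix ι ι ℝ} {c : ℝ}

theorem dotProduct_mulVec_nonpos_of_dotProduct_one_eq_zero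
    (h : ∀ x : ι → ℝ, x ⬝ᵥ (fun _ => 1) = 1 → x ⬝ᵥ A *ᵥ x ≤ c)
    {x : ι → ℝ} (hx : x ⬝ᵥ (fun _ => 1) = 0) : x ⬝ᵥ A *ᵥ x ≤ 0 := by
  classical
  cases isEmpty_or_nonempty ι
  · simp [Subsingleton.elim x 0]
  obtain ⟨i⟩ := ‹Nonempty ι›
  set y : ι → ℝ := Pi.single i 1
  have hy : y ⬝ᵥ (fun _ => 1) = 1 := by simp [y]
  refine nonpos_of_forall_mul_sq_add_mul_le (b := x ⬝ᵥ A *ᵥ y + y ⬝ᵥ A *ᵥ x)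
    (c := c - y ⬝ᵥ A *ᵥ y) fun t => ?_
  have := h (t • x + y) (by simp [add_dotProduct, hx, hy])
  simp only [mulVec_add, mulVec_smul, add_dotProduct, smul_dotProduct, dotProduct_add,
    dotProduct_smul, smul_eq_mul] at this
  linarith

theorem dotProduct_mulVec_le_mul_sq
    (h : ∀ x : ι → ℝ, x ⬝ᵥ (fun _ => 1) = 1 → x ⬝ᵥ A *ᵥ x ≤ c) (x : ι → ℝ) :
    x ⬝ᵥ A *ᵥ x ≤ c * (x ⬝ᵥ fun _ => 1) ^ 2 := by
  set s := x ⬝ᵥ fun _ => 1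
  rcases eq_or_ne s 0 with hs | hs
  · simpa [hs] using dotProduct_mulVec_nonpos_of_dotProduct_one_eq_zero h hs
  have := h (s⁻¹ • x) (by rw [smul_dotProduct, smul_eq_mul, inv_mul_cancel₀ hs])
  rw [mulVec_smul, smul_dotProduct, dotProduct_smul, smul_eq_mul, smul_eq_mul, ← mul_assoc,
    ← sq, inv_pow, inv_mul_le_iff₀ (by positivity)] at this
  linarith

theorem dotProduct_mulVec_of_one_eq_sq (x : ι → ℝ) :
    x ⬝ᵥ (of fun _ _ => (1 : ℝ)) *ᵥ x = (x ⬝ᵥ fun _ => 1) ^ 2 := by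
  simp [dotProduct, mulVec, sq, Finset.sum_mul]

theorem posSemidef_of_one_sub_inv_smul (hA : A.IsSymm) (hc : 0 < c)
    (h : ∀ x : ι → ℝ, x ⬝ᵥ (fun _ => 1) = 1 → x ⬝ᵥ A *ᵥ x ≤ c) :
    ((of fun _ _ => (1 : ℝ)) - c⁻¹ • A).PosSemidef := by
  refine posSemidef_iff_dotProduct_mulVec.mpr ⟨?_, fun x => ?_⟩
  · exact isHermitian_iff_isSymm.mpr ((IsSymm.ext fun _ _ => rfl).sub (hA.smul _))
  rw [star_trivial, sub_mulVec, dotProduct_sub, smul_mulVec, dotProduct_smul, smul_eq_mul,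
    dotProduct_mulVec_of_one_eq_sq, sub_nonneg, inv_mul_le_iff₀ hc]
  exact dotProduct_mulVec_le_mul_sq h x

end

theorem variogram_sufficient_conditions (n : ℕ) (σ2 : ℝ) (hσ : 0 < σ2)
    (Γ : Matrix (Fin n) (Fin n) ℝ) (hsymm : Γ.IsSymm) (hdiag : ∀ i, Γ i i = 0)
    (hbound : ∀ x : Fin n → ℝ, x ⬝ᵥ (fun _ => (1:ℝ)) = 1 → x ⬝ᵥ Γ.mulVec x ≤ σ2) :
    ((Matrix.of fun _ _ => (1:ℝ)) - σ2⁻¹ • Γ).PosSemidef ∧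
    (∀ i, (((Matrix.of fun _ _ => (1:ℝ)) - σ2⁻¹ • Γ : Matrix (Fin n) (Fin n) ℝ)) i i = 1) ∧
    Γ = σ2 • ((Matrix.of fun _ _ => (1:ℝ)) -
      ((Matrix.of fun _ _ => (1:ℝ)) - σ2⁻¹ • Γ)) :=
  ⟨posSemidef_of_one_sub_inv_smul hsymm hσ hbound, fun i => by simp [hdiag i],
    by rw [sub_sub_cancel, smul_inv_smul₀ hσ.ne']⟩
end

section
/- Let R be an invertible n×n correlation matrix with n ≥ 2. Then 𝟙'R⁻¹𝟙 ≠ 1. -/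
/-!
Write `𝟙` for the all-ones vector and `x = R⁻¹𝟙`, so that `R x = 𝟙`. Cauchy–Schwarz for the
inner product `⟪u, v⟫ = uᵀ R v` gives `n² = ⟪𝟙, x⟫² ≤ ⟪𝟙, 𝟙⟫ ⟪x, x⟫ = (𝟙ᵀR𝟙)(𝟙ᵀR⁻¹𝟙)`.
On the other hand, testing positivity of `R` on `eᵢ - eⱼ` shows that the off-diagonal entries of a
correlation matrix are `< 1`, so for `n ≥ 2` the sum of its entries `𝟙ᵀR𝟙` is `< n²`.
Hence `𝟙ᵀR⁻¹𝟙 > 1`.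
-/

open Matrix

namespace Matrix

variable {ι : Type*} [Fintype ι]

lemma IsSymm.dotProduct_mulVec_comm {α : Type*} [CommSemiring α] {A : Matrix ι ι α}
    (hA : A.IsSymm) (u v : ι → α) : u ⬝ᵥ A *ᵥ v = v ⬝ᵥ A *ᵥ u := by
  rw [dotProduct_mulVec, ← mulVec_transpose, hA.eq, dotProduct_comm]

theorem PosSemidef.sq_dotProduct_mulVec_le {R : Matrix ι ι ℝ} (hR : R.PosSemidef)
    (u v : ι → ℝ) : (u ⬝ᵥ R *ᵥ v) ^ 2 ≤ (u ⬝ᵥ R *ᵥ u) * (v ⬝ᵥ R *ᵥ v) := by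
  have hsymm : R.IsSymm := isHermitian_iff_isSymm.mp hR.isHermitian
  have hquad : ∀ t : ℝ,
      0 ≤ (v ⬝ᵥ R *ᵥ v) * (t * t) + 2 * (u ⬝ᵥ R *ᵥ v) * t + u ⬝ᵥ R *ᵥ u := by
    intro t
    have := hR.dotProduct_mulVec_nonneg (u + t • v)
    simp only [star_trivial, mulVec_add, mulVec_smul, add_dotProduct, dotProduct_add,
      smul_dotProduct, dotProduct_smul, smul_eq_mul, hsymm.dotProduct_mulVec_comm v u] at this
    linarith
  have := discrim_le_zero hquad
  rw [discrim] at this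
  linarith

theorem PosDef.sq_dotProduct_le_mul_inv [DecidableEq ι] {R : Matrix ι ι ℝ} (hR : R.PosDef)
    (u : ι → ℝ) : (u ⬝ᵥ u) ^ 2 ≤ (u ⬝ᵥ R *ᵥ u) * (u ⬝ᵥ R⁻¹ *ᵥ u) := by
  have hRx : R *ᵥ R⁻¹ *ᵥ u = u := by
    rw [mulVec_mulVec, mul_nonsing_inv R (isUnit_iff_ne_zero.mpr hR.det_pos.ne'), one_mulVec]
  have := hR.posSemidef.sq_dotProduct_mulVec_le u (R⁻¹ *ᵥ u)
  rwa [hRx, dotProduct_comm (R⁻¹ *ᵥ u)] at this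

theorem PosDef.two_mul_apply_lt_add_diag {R : Matrix ι ι ℝ} (hR : R.PosDef)
    {i j : ι} (hij : i ≠ j) : 2 * R i j < R i i + R j j := by
  classical
  have hv : Pi.single i 1 - Pi.single j 1 ≠ (0 : ι → ℝ) :=
    sub_ne_zero.mpr fun h => by simpa [hij.symm] using congrFun h j
  have := hR.dotProduct_mulVec_pos hv
  simp only [star_trivial, mulVec_sub, sub_dotProduct, dotProduct_sub, mulVec_single_one,
    single_one_dotProduct, col_apply] at this
  linarith [(isHermitian_iff_isSymm.mp hR.isHermitian).apply i j]

theorem PosDef.apply_lt_one_of_diag_eq_one {R : Matrix ι ι ℝ} (hR : R.PosDef)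
    (hdiag : ∀ i, R i i = 1) {i j : ι} (hij : i ≠ j) : R i j < 1 := by
  linarith [hR.two_mul_apply_lt_add_diag hij, hdiag i, hdiag j]

theorem PosDef.one_dotProduct_mulVec_one_lt_of_diag_eq_one [Nontrivial ι] {R : Matrix ι ι ℝ}
    (hR : R.PosDef) (hdiag : ∀ i, R i i = 1) :
    1 ⬝ᵥ R *ᵥ 1 < (Fintype.card ι : ℝ) ^ 2 := by
  have hle : ∀ p : ι × ι, R p.1 p.2 ≤ 1 := fun ⟨i, j⟩ => by
    rcases eq_or_ne i j with rfl | hij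
    · exact (hdiag i).le
    · exact (hR.apply_lt_one_of_diag_eq_one hdiag hij).le
  obtain ⟨i, j, hij⟩ := exists_pair_ne ι
  calc 1 ⬝ᵥ R *ᵥ 1 = ∑ p : ι × ι, R p.1 p.2 := by
        simp only [dotProduct, mulVec, Pi.one_apply, one_mul, mul_one, Fintype.sum_prod_type]
    _ < ∑ _p : ι × ι, (1 : ℝ) :=
        Finset.sum_lt_sum (fun p _ => hle p)
          ⟨(i, j), Finset.mem_univ _, hR.apply_lt_one_of_diag_eq_one hdiag hij⟩
    _ = (Fintype.card ι : ℝ) ^ 2 := by simp [sq]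

end Matrix

theorem correlation_inv_quadform_ne_one (n : ℕ) (hn : 2 ≤ n)
    (R : Matrix (Fin n) (Fin n) ℝ) (hR : R.PosDef) (hdiag : ∀ i, R i i = 1) :
    (fun _ => (1:ℝ)) ⬝ᵥ R⁻¹.mulVec (fun _ => (1:ℝ)) ≠ 1 := by
  intro hinv
  have : Nontrivial (Fin n) := Fin.nontrivial_iff_two_le.mpr hn
  have hsum := hR.one_dotProduct_mulVec_one_lt_of_diag_eq_one hdiag
  have hcs := hR.sq_dotProduct_le_mul_inv 1
  rw [one_dotProduct_one] at hcs
  change (1 : Fin n → ℝ) ⬝ᵥ R⁻¹ *ᵥ 1 = 1 at hinv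
  rw [hinv, mul_one] at hcs
  linarith
end

section
/- Let Σ = σ²R be invertible with R a correlation matrix, and let Γ = σ²(𝟙𝟙' - R) = σ²𝟙𝟙' - Σ. Then Γ is invertible and Γ⁻¹ = -Σ⁻¹ - (σ⁻² - 𝟙'Σ⁻¹𝟙)⁻¹ Σ⁻¹𝟙𝟙'Σ⁻¹. -/
/-!
`Γ = -S + σ²𝟙𝟙ᵀ` is a rank-one update of `-S`, so the Sherman–Morrison formula gives the inverse
as soon as its denominator `σ⁻² - 𝟙ᵀS⁻¹𝟙 = σ⁻²(1 - 𝟙ᵀR⁻¹𝟙)` is nonzero. For a correlation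
matrix `𝟙ᵀR⁻¹𝟙 = 1` would force `R⁻¹𝟙 = eᵢ` for every index `i`, impossible when `n ≥ 2`.
-/

open Matrix

namespace Matrix

variable {ι : Type*} [Fintype ι]

theorem vecMulVec_mul_mul_vecMulVec {K : Type*} [CommSemiring K] (u v : ι → K)
    (M : Matrix ι ι K) :
    vecMulVec u v * M * vecMulVec u v = (v ⬝ᵥ M *ᵥ u) • vecMulVec u v := by
  rw [Matrix.mul_assoc, mul_vecMulVec, vecMulVec_mul_vecMulVec, vecMulVec_smul]

variable [DecidableEq ι]

theorem smul_vecMulVec_sub_mul_eq_one {K : Type*} [Field K] {S : Matrix ι ι K}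
    (hS : IsUnit S.det) (u v : ι → K) {a : K} (ha : a ≠ 0) (hc : a⁻¹ - v ⬝ᵥ S⁻¹ *ᵥ u ≠ 0) :
    (a • vecMulVec u v - S) *
      (-S⁻¹ - (a⁻¹ - v ⬝ᵥ S⁻¹ *ᵥ u)⁻¹ • (S⁻¹ * vecMulVec u v * S⁻¹)) = 1 := by
  set c := a⁻¹ - v ⬝ᵥ S⁻¹ *ᵥ u with hc_def
  have expand : (a • vecMulVec u v - S) * (-S⁻¹ - c⁻¹ • (S⁻¹ * vecMulVec u v * S⁻¹)) =
      1 + (c⁻¹ - a - a * c⁻¹ * (v ⬝ᵥ S⁻¹ *ᵥ u)) • (vecMulVec u v * S⁻¹) := by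
    simp only [Matrix.sub_mul, Matrix.mul_sub, Matrix.mul_neg, Matrix.smul_mul,
      Matrix.mul_smul, smul_smul, ← Matrix.mul_assoc, mul_nonsing_inv S hS, Matrix.one_mul,
      vecMulVec_mul_mul_vecMulVec]
    module
  have hcoeff : c⁻¹ - a - a * c⁻¹ * (v ⬝ᵥ S⁻¹ *ᵥ u) = 0 := by
    have hdot : v ⬝ᵥ S⁻¹ *ᵥ u = a⁻¹ - c := by rw [hc_def]; ring
    rw [hdot]
    field_simp
    ring
  rw [expand, hcoeff, zero_smul, add_zero]

/- If `𝟙ᵀR⁻¹𝟙 = 1`, the quadratic form of `R` vanishes at `eᵢ - R⁻¹𝟙`: expanding it gives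
`Rᵢᵢ - 2 + 𝟙ᵀR⁻¹𝟙 = 0`. -/
theorem PosDef.inv_mulVec_one_eq_single {R : Matrix ι ι ℝ} (hR : R.PosDef)
    (hdiag : ∀ i, R i i = 1) (h : 1 ⬝ᵥ R⁻¹ *ᵥ 1 = 1) (i : ι) :
    R⁻¹ *ᵥ 1 = Pi.single i 1 := by
  set y := R⁻¹ *ᵥ 1
  have hRy : R *ᵥ y = 1 := by
    rw [mulVec_mulVec, mul_nonsing_inv R ((isUnit_iff_isUnit_det R).mp hR.isUnit), one_mulVec]
  have hyR : y ᵥ* R = 1 := by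
    rw [← hR.isHermitian.eq, conjTranspose_eq_transpose_of_trivial, vecMul_transpose, hRy]
  have hquad : (Pi.single i 1 - y) ⬝ᵥ R *ᵥ (Pi.single i 1 - y) = 0 := by
    rw [mulVec_sub, hRy, sub_dotProduct, dotProduct_sub, dotProduct_sub, dotProduct_mulVec y,
      hyR, dotProduct_comm y, h]
    simp [dotProduct_single, hdiag]
  by_contra hne
  have hpos := hR.dotProduct_mulVec_pos (sub_ne_zero.mpr (Ne.symm hne))
  rw [star_trivial, hquad] at hpos
  exact lt_irrefl 0 hpos

theorem PosDef.one_dotProduct_inv_mulVec_one_ne_one [Nontrivial ι] {R : Matrix ι ι ℝ}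
    (hR : R.PosDef) (hdiag : ∀ i, R i i = 1) : 1 ⬝ᵥ R⁻¹ *ᵥ 1 ≠ 1 := by
  intro h
  obtain ⟨i, j, hij⟩ := exists_pair_ne ι
  have hsingle := (hR.inv_mulVec_one_eq_single hdiag h i).symm.trans
    (hR.inv_mulVec_one_eq_single hdiag h j)
  simpa [hij] using congrFun hsingle i

end Matrix

theorem variogram_inverse (n : ℕ) (hn : 2 ≤ n) (σ2 : ℝ) (hσ : 0 < σ2)
    (R : Matrix (Fin n) (Fin n) ℝ) (hR : R.PosDef) (hdiag : ∀ i, R i i = 1)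
    (S Γ : Matrix (Fin n) (Fin n) ℝ) (hS : S = σ2 • R)
    (hΓ : Γ = σ2 • (Matrix.of fun _ _ => (1:ℝ)) - S) :
    IsUnit Γ.det ∧
    Γ⁻¹ = -S⁻¹ - (σ2⁻¹ - (fun _ => (1:ℝ)) ⬝ᵥ S⁻¹.mulVec (fun _ => (1:ℝ)))⁻¹ •
      (S⁻¹ * (Matrix.of fun _ _ => (1:ℝ)) * S⁻¹) := by
  have : Nontrivial (Fin n) := Fin.nontrivial_iff_two_le.mpr hn
  have hRdet : IsUnit R.det := (isUnit_iff_isUnit_det R).mp hR.isUnit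
  have hSinv : S⁻¹ = σ2⁻¹ • R⁻¹ := by
    have := invertibleOfNonzero hσ.ne'
    rw [hS, inv_smul _ _ hRdet, invOf_eq_inv]
  have hSdet : IsUnit S.det := by
    rw [hS, det_smul]
    exact (hσ.ne'.isUnit.pow _).mul hRdet
  have hc : σ2⁻¹ - 1 ⬝ᵥ S⁻¹ *ᵥ 1 ≠ 0 := by
    rw [hSinv, smul_mulVec, dotProduct_smul, smul_eq_mul, ← mul_one_sub]
    exact mul_ne_zero (inv_ne_zero hσ.ne')
      (sub_ne_zero.mpr (hR.one_dotProduct_inv_mulVec_one_ne_one hdiag).symm)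
  have hJ : (Matrix.of fun _ _ => 1 : Matrix (Fin n) (Fin n) ℝ) = vecMulVec 1 1 := by
    ext; simp [vecMulVec_apply]
  have hright := smul_vecMulVec_sub_mul_eq_one hSdet 1 1 hσ.ne' hc
  rw [← hJ, ← hΓ] at hright
  exact ⟨isUnit_det_of_right_inverse hright, inv_eq_right_inv hright⟩
end
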